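/- arXiv:2109.12486 — 6 statements merged into one kernel-verified Lean document; each statement's English description precedes it below -/
import Mathlib

section
/- Let X be a standard Borel space, let a countable group Γ act on X by Borel automorphisms, and let F be the induced orbit equivalence relation. Suppose E is a Borel equivalence relation on X with E ⊆ F. If F admits a Borel selector, then E admits a Borel selector. -/
/-! Enumerate `Γ` as `(γₙ)`. Every `x` is `E`-related to some translate `γₙ • f x` of its
`F`-selector value, so choosing the least such `n` is Borel; and for `E`-related `x, y` the two
searches run along the same sequence `γₙ • f x = γₙ • f y` and test the same `E`-class, hence stop
at the same point. -/

section FirstRelated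

variable {X : Type*} {E : X → X → Prop} {u : ℕ → X → X}

open Classical in
noncomputable def firstRelated (E : X → X → Prop) (u : ℕ → X → X)
    (h : ∀ x, ∃ n, E (u n x) x) (x : X) : X :=
  u (Nat.find (h x)) x

theorem firstRelated_rel (h : ∀ x, ∃ n, E (u n x) x) (x : X) : E (firstRelated E u h x) x := by
  classical
  exact Nat.find_spec (h x)

theorem firstRelated_eq_of_rel (hE : Equivalence E) (h : ∀ x, ∃ n, E (u n x) x) {x y : X}
    (hu : ∀ n, u n x = u n y) (hxy : E x y) : firstRelated E u h x = firstRelated E u h y := by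
  classical
  have same_test : ∀ n, E (u n x) x ↔ E (u n y) y := fun n => by
    rw [hu n]
    exact ⟨fun h => hE.trans h hxy, fun h => hE.trans h (hE.symm hxy)⟩
  have same_index : Nat.find (h x) = Nat.find (h y) := by
    simp only [same_test]
  rw [firstRelated, firstRelated, same_index, hu]

theorem measurable_firstRelated [MeasurableSpace X] (hE : MeasurableSet {p : X × X | E p.1 p.2})
    (hu : ∀ n, Measurable (u n)) (h : ∀ x, ∃ n, E (u n x) x) :
    Measurable (firstRelated E u h) := by
  classical
  have hindex : Measurable fun x => Nat.find (h x) :=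
    measurable_find h fun n => ((hu n).prodMk measurable_id) hE
  exact (measurable_from_prod_countable_left (f := fun p : X × ℕ => u p.2 p.1) hu).comp
    (measurable_id.prodMk hindex)

end FirstRelated

theorem stmt_0_general {X : Type*} [MeasurableSpace X]
    {Γ : Type*} [Group Γ] [Countable Γ] [MulAction Γ X]
    (hact : ∀ γ : Γ, Measurable fun x : X => γ • x)
    (E : X → X → Prop) (hE : Equivalence E)
    (hEmeas : MeasurableSet {p : X × X | E p.1 p.2})
    (hsub : ∀ x y : X, E x y → ∃ γ : Γ, γ • x = y)
    (f : X → X) (hf : Measurable f)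
    (hf1 : ∀ x : X, ∃ γ : Γ, γ • x = f x)
    (hf2 : ∀ x y : X, (∃ γ : Γ, γ • x = y) → f x = f y) :
    ∃ g : X → X, Measurable g ∧ (∀ x, E (g x) x) ∧ ∀ x y, E x y → g x = g y := by
  obtain ⟨γ, hγ⟩ := exists_surjective_nat Γ
  have hrel : ∀ x, ∃ n, E (γ n • f x) x := fun x => by
    obtain ⟨δ, hδ⟩ := hf1 x
    obtain ⟨n, hn⟩ := hγ δ⁻¹
    exact ⟨n, by rw [hn, ← hδ, inv_smul_smul]; exact hE.refl x⟩
  refine ⟨firstRelated E (fun n x => γ n • f x) hrel,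
    measurable_firstRelated hEmeas (fun n => (hact (γ n)).comp hf) hrel,
    firstRelated_rel hrel, fun x y hxy => firstRelated_eq_of_rel hE hrel ?_ hxy⟩
  intro n
  rw [hf2 x y (hsub x y hxy)]

/-- If `F`, the orbit equivalence relation of a Borel action of a countable group `Γ` on a
standard Borel space `X`, admits a Borel selector, then so does any Borel equivalence
relation `E ⊆ F`. -/
theorem stmt_0 {X : Type*} [MeasurableSpace X] [StandardBorelSpace X]
    {Γ : Type*} [Group Γ] [Countable Γ] [MulAction Γ X]
    (hact : ∀ γ : Γ, Measurable fun x : X => γ • x)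
    (E : X → X → Prop) (hE : Equivalence E)
    (hEmeas : MeasurableSet {p : X × X | E p.1 p.2})
    (hsub : ∀ x y : X, E x y → ∃ γ : Γ, γ • x = y)
    (f : X → X) (hf : Measurable f)
    (hf1 : ∀ x : X, ∃ γ : Γ, γ • x = f x)
    (hf2 : ∀ x y : X, (∃ γ : Γ, γ • x = y) → f x = f y) :
    ∃ g : X → X, Measurable g ∧ (∀ x, E (g x) x) ∧ ∀ x y, E x y → g x = g y :=
  stmt_0_general hact E hE hEmeas hsub f hf hf1 hf2
end

section
/- Let X be a nonempty Polish space and let E be an equivalence relation on X which is σ-compact as a subset of X × X and all of whose equivalence classes are dense in X. Let (K_n) be a sequence of compact subsets of X such that [K_n]_E ≠ X for every n. Then ⋃_n [K_n]_E ≠ X. -/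
/-! Each saturation `[K n]_E` is the projection to the first factor of `E ∩ (X × K n)`, hence
σ-compact. Its complement is nonempty and `E`-invariant, so it contains a whole `E`-class and is
dense; thus `[K n]_E` is a countable union of compact sets with empty interior, i.e. meagre.
By the Baire category theorem the countable union of these meagre sets cannot be all of `X`. -/

open Set

section

variable {X Y : Type*} [TopologicalSpace X] [TopologicalSpace Y]

lemma IsSigmaCompact.inter_right {s t : Set X} (hs : IsSigmaCompact s) (ht : IsClosed t) :
    IsSigmaCompact (s ∩ t) := by
  obtain ⟨K, hK, rfl⟩ := hs
  exact ⟨fun n => K n ∩ t, fun n => (hK n).inter_right ht, by rw [iUnion_inter]⟩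

lemma IsSigmaCompact.isMeagre_of_interior_eq_empty [T2Space X] {s : Set X}
    (hs : IsSigmaCompact s) (hint : interior s = ∅) : IsMeagre s := by
  obtain ⟨K, hK, rfl⟩ := hs
  refine isMeagre_iUnion fun n => IsNowhereDense.isMeagre ?_
  rw [(hK n).isClosed.isNowhereDense_iff]
  exact subset_empty_iff.1 (hint ▸ interior_mono (subset_iUnion K n))

lemma isSigmaCompact_setOf_exists_mem_rel [T2Space Y] {R : X → Y → Prop}
    (hR : IsSigmaCompact {p : X × Y | R p.1 p.2}) {K : Set Y} (hK : IsCompact K) :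
    IsSigmaCompact {x | ∃ y ∈ K, R x y} := by
  convert (hR.inter_right (hK.isClosed.preimage continuous_snd)).image continuous_fst using 1
  ext x
  simp [and_comm]

lemma interior_setOf_exists_mem_rel_eq_empty {E : X → X → Prop} [IsTrans X E]
    (hdense : ∀ x, Dense {y | E x y}) {K : Set X} (hsat : {x | ∃ k ∈ K, E x k} ≠ univ) :
    interior {x | ∃ k ∈ K, E x k} = ∅ := by
  obtain ⟨y, hy⟩ := (ne_univ_iff_exists_notMem _).1 hsat
  rw [interior_eq_empty_iff_dense_compl]
  exact (hdense y).mono fun z hyz ⟨k, hk, hzk⟩ => hy ⟨k, hk, _root_.trans hyz hzk⟩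

end

/-- Let `E` be a σ-compact equivalence relation with dense classes on a nonempty Polish space `X`.
If `(K n)` are compact sets whose saturations are each proper subsets of `X`, then the union of
the saturations is still a proper subset of `X`. -/
theorem stmt_4 {X : Type*} [TopologicalSpace X] [PolishSpace X] [Nonempty X]
    (E : X → X → Prop) (hE : Equivalence E)
    (hσ : IsSigmaCompact {p : X × X | E p.1 p.2})
    (hdense : ∀ x : X, Dense {y : X | E x y})
    (K : ℕ → Set X) (hK : ∀ n, IsCompact (K n))
    (hsat : ∀ n, {x : X | ∃ k ∈ K n, E x k} ≠ Set.univ) :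
    (⋃ n, {x : X | ∃ k ∈ K n, E x k}) ≠ Set.univ := by
  have : IsTrans X E := ⟨fun _ _ _ => hE.trans⟩
  have hmeagre : ∀ n, IsMeagre {x : X | ∃ k ∈ K n, E x k} := fun n =>
    (isSigmaCompact_setOf_exists_mem_rel hσ (hK n)).isMeagre_of_interior_eq_empty
      (interior_setOf_exists_mem_rel_eq_empty hdense (hsat n))
  intro hcover
  exact not_isMeagre_of_isOpen isOpen_univ univ_nonempty (hcover ▸ isMeagre_iUnion hmeagre)
end

section
/- Let G be a locally finite graph (possibly with loops or parallel edges, encoded by a symmetric adjacency relation) with countable vertex set V, and let k ≥ 1. Suppose every finite set F ⊆ V satisfies |N_G(F)| ≥ k|F|, where N_G(F) is the set of vertices adjacent to some vertex of F. Then there exists a k-to-1 surjection p : V → V such that v is adjacent to p(v) for every v ∈ V. -/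
open Function

lemma csb_rel {X Y : Type*} {f : X → Y} {g : Y → X}
    (hf : Injective f) (hg : Injective g) :
    ∃ h : X → Y, Bijective h ∧ ∀ x, h x = f x ∨ g (h x) = x := by
  classical
  cases isEmpty_or_nonempty X with
  | inl hX =>
    exact ⟨f, ⟨hf, fun y => (hX.false (g y)).elim⟩, fun x => Or.inl rfl⟩
  | inr hX =>
    haveI : Nonempty Y := ⟨f hX.some⟩
    set S : Set X := ⋃ n, (g ∘ f)^[n] '' (Set.range g)ᶜ with hSdef
    have hS0 : (Set.range g)ᶜ ⊆ S := by
      intro x hx; exact Set.mem_iUnion.2 ⟨0, ⟨x, hx, rfl⟩⟩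
    have hSstep : ∀ x ∈ S, g (f x) ∈ S := by
      intro x hx
      obtain ⟨n, x0, hx0, rfl⟩ := by
        simpa only [hSdef, Set.mem_iUnion, Set.mem_image] using hx
      exact Set.mem_iUnion.2 ⟨n + 1, ⟨x0, hx0, by
        rw [Function.iterate_succ_apply']; rfl⟩⟩
    have hnot : ∀ x, x ∉ S → ∃ y, g y = x := by
      intro x hx
      by_contra hc
      push_neg at hc
      exact hx (hS0 (by simpa [Set.range] using hc))
    set h : X → Y := fun x => if x ∈ S then f x else invFun g x with hhdef
    have hginv : ∀ x, x ∉ S → g (h x) = x := by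
      intro x hx
      obtain ⟨y, hy⟩ := hnot x hx
      simp only [hhdef, if_neg hx]
      exact Function.invFun_eq ⟨y, hy⟩
    have hinS : ∀ x ∈ S, h x = f x := fun x hx => by simp [hhdef, if_pos hx]
    refine ⟨h, ⟨?_, ?_⟩, ?_⟩
    · intro x1 x2 he
      by_cases h1 : x1 ∈ S <;> by_cases h2 : x2 ∈ S
      · exact hf (by rwa [hinS x1 h1, hinS x2 h2] at he)
      · exfalso
        have := hginv x2 h2
        rw [← he, hinS x1 h1] at this
        exact h2 (this ▸ hSstep x1 h1)
      · exfalso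
        have := hginv x1 h1
        rw [he, hinS x2 h2] at this
        exact h1 (this ▸ hSstep x2 h2)
      · rw [← hginv x1 h1, ← hginv x2 h2, he]
    · intro y
      by_cases hgy : g y ∈ S
      · obtain ⟨n, x0, hx0, hx0e⟩ := by
          simpa only [hSdef, Set.mem_iUnion, Set.mem_image] using hgy
        cases n with
        | zero => exact absurd ⟨y, hx0e.symm⟩ hx0
        | succ m =>
          rw [Function.iterate_succ_apply'] at hx0e
          set x := (g ∘ f)^[m] x0 with hx
          have hxS : x ∈ S := Set.mem_iUnion.2 ⟨m, ⟨x0, hx0, rfl⟩⟩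
          have hfx : f x = y := hg hx0e
          exact ⟨x, by rw [hinS x hxS, hfx]⟩
      · exact ⟨g y, hg (hginv (g y) hgy)⟩
    · intro x
      by_cases hx : x ∈ S
      · exact Or.inl (hinS x hx)
      · exact Or.inr (hginv x hx)
/-- Let `A` be a symmetric, locally finite adjacency relation on a countable vertex set `V`
(loops allowed), `k ≥ 1`, and suppose every finite `F ⊆ V` satisfies `|N(F)| ≥ k|F|`. Then
there is a `k`-to-`1` surjection `p : V → V` with `v` adjacent to `p v` for every `v`. -/
theorem stmt_13 {V : Type*} [Countable V] (A : V → V → Prop)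
    (hsymm : ∀ v w : V, A v w → A w v)
    (hlf : ∀ v : V, {w : V | A v w}.Finite)
    (k : ℕ) (hk : 1 ≤ k)
    (hexp : ∀ F : Finset V, k * F.card ≤ {w : V | ∃ v ∈ F, A v w}.ncard) :
    ∃ p : V → V, (∀ v : V, A v (p v)) ∧
      ∀ w : V, {v : V | p v = w}.Finite ∧ {v : V | p v = w}.ncard = k := by
  classical
  set nbr : V → Finset V := fun v => (hlf v).toFinset with hnbrdef
  have hmem : ∀ v w, w ∈ nbr v ↔ A v w := fun v w => Set.Finite.mem_toFinset _
  -- Hall condition in Finset form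
  have hexp' : ∀ F : Finset V, k * F.card ≤ (F.biUnion nbr).card := by
    intro F
    have hset : {w : V | ∃ v ∈ F, A v w} = ↑(F.biUnion nbr) := by
      ext w; simp [Finset.mem_biUnion, hmem]
    have := hexp F
    rwa [hset, Set.ncard_coe_finset] at this
  -- Left-to-right matching: V → V × Fin k
  obtain ⟨f, hf_inj, hf_mem⟩ :=
    (Finset.all_card_le_biUnion_card_iff_exists_injective
      (fun v : V => (nbr v) ×ˢ (Finset.univ : Finset (Fin k)))).1 (by
        intro S
        have hU : S.biUnion (fun v => (nbr v) ×ˢ (Finset.univ : Finset (Fin k)))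
            = (S.biUnion nbr) ×ˢ (Finset.univ : Finset (Fin k)) := by
          ext ⟨w, i⟩
          simp [Finset.mem_biUnion, Finset.mem_product]
        rw [hU, Finset.card_product, Finset.card_univ, Fintype.card_fin]
        calc S.card ≤ k * S.card := Nat.le_mul_of_pos_left _ hk
          _ ≤ (S.biUnion nbr).card := hexp' S
          _ ≤ (S.biUnion nbr).card * k := Nat.le_mul_of_pos_right _ hk)
  -- Right-to-left matching: V × Fin k → V
  obtain ⟨g, hg_inj, hg_mem⟩ :=
    (Finset.all_card_le_biUnion_card_iff_exists_injective
      (fun x : V × Fin k => nbr x.1)).1 (by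
        intro T
        set F := T.image Prod.fst with hF
        have hU : T.biUnion (fun x => nbr x.1) = F.biUnion nbr := by
          ext w
          simp only [Finset.mem_biUnion, hF, Finset.mem_image]
          constructor
          · rintro ⟨x, hx, hw⟩; exact ⟨x.1, ⟨x, hx, rfl⟩, hw⟩
          · rintro ⟨v, ⟨x, hx, rfl⟩, hw⟩; exact ⟨x, hx, hw⟩
        have hT : T.card ≤ k * F.card := by
          have hsub : T ⊆ F ×ˢ (Finset.univ : Finset (Fin k)) := by
            intro x hx
            simp only [Finset.mem_product, Finset.mem_univ, and_true, hF, Finset.mem_image]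
            exact ⟨x, hx, rfl⟩
          calc T.card ≤ (F ×ˢ (Finset.univ : Finset (Fin k))).card := Finset.card_le_card hsub
            _ = F.card * k := by rw [Finset.card_product, Finset.card_univ, Fintype.card_fin]
            _ = k * F.card := Nat.mul_comm _ _
        rw [hU]
        exact hT.trans (hexp' F))
  -- Schröder–Bernstein with the relation preserved
  obtain ⟨h, hbij, hprop⟩ := csb_rel hf_inj hg_inj
  refine ⟨fun v => (h v).1, ?_, ?_⟩
  · intro v
    show A v (h v).1
    rcases hprop v with he | he
    · have := hf_mem v
      rw [Finset.mem_product] at this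
      rw [he]
      exact (hmem v _).1 this.1
    · have := (hmem (h v).1 _).1 (hg_mem (h v))
      rw [he] at this
      exact hsymm _ _ this
  · intro w
    set e := Equiv.ofBijective h hbij with hedef
    have hfib : {v : V | (h v).1 = w} = e.symm '' {x : V × Fin k | x.1 = w} := by
      ext v
      simp only [Set.mem_setOf_eq]
      constructor
      · intro hv; exact ⟨h v, hv, by simp [hedef]⟩
      · rintro ⟨x, hx, rfl⟩
        have : h (e.symm x) = x := e.apply_symm_apply x
        rw [this]; exact hx
    have hxset : {x : V × Fin k | x.1 = w} = (fun i : Fin k => (w, i)) '' Set.univ := by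
      ext ⟨a, b⟩
      simp only [Set.mem_setOf_eq, Set.image_univ, Set.mem_range, Prod.mk.injEq]
      constructor
      · rintro rfl; exact ⟨b, rfl, rfl⟩
      · rintro ⟨i, rfl, rfl⟩; rfl
    have hxfin : {x : V × Fin k | x.1 = w}.Finite := by
      rw [hxset]; exact (Set.finite_univ).image _
    have hxcard : {x : V × Fin k | x.1 = w}.ncard = k := by
      rw [hxset, Set.ncard_image_of_injective _ (fun i j hij => by
        simpa using hij)]
      rw [Set.ncard_univ, Nat.card_eq_fintype_card, Fintype.card_fin]
    constructor
    · rw [hfib]; exact hxfin.image _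
    · rw [hfib, Set.ncard_image_of_injective _ e.symm.injective, hxcard]
end

section
/- Let Γ be a countable discrete group, let K be a compact topological space, and let p : K → ℓ¹(Γ) be a map such that p(x) is a probability distribution on Γ for every x (p(x) ≥ 0 and Σ_γ p(x)(γ) = 1), and such that p is continuous when ℓ¹(Γ) carries the topology of pointwise convergence. Then for every ε > 0 there exist a finite set F ⊆ Γ containing the identity and a continuous map q : K → ℓ¹(Γ) such that each q(x) is a probability distribution supported in F, and ‖p(x) − q(x)‖₁ < ε for every x ∈ K. -/
/-!
The partial sums `∑ γ ∈ F, p x γ` increase with `F` and converge pointwise to the continuous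
function `1`, so by Dini's theorem they converge uniformly on the compact space `K`: some finite
`F ∋ 1` carries mass `> 1 - ε / 2` at every `x`. Moving the missing mass of `p x` onto `1` gives
a probability vector supported in `F`, with continuous coordinates, at `ℓ¹`-distance
`2 (1 - ∑ γ ∈ F, p x γ) < ε` from `p x`.
-/

open Filter

theorem Finset.hasSum_indicator {ι : Type*} (F : Finset ι) (f : ι → ℝ) :
    HasSum (Set.indicator F f) (∑ i ∈ F, f i) :=
  hasSum_subtype_iff_indicator.1 (F.hasSum f)

theorem tendstoUniformly_finset_sum_of_hasSum {ι K : Type*} [TopologicalSpace K] [CompactSpace K]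
    {p : K → ι → ℝ} {s : K → ℝ} (hpos : ∀ x i, 0 ≤ p x i) (hsum : ∀ x, HasSum (p x) (s x))
    (hcont : ∀ i, Continuous fun x => p x i) (hs : Continuous s) :
    TendstoUniformly (fun (F : Finset ι) x => ∑ i ∈ F, p x i) s atTop :=
  Monotone.tendstoUniformly_of_forall_tendsto (fun F => continuous_finsetSum F fun i _ => hcont i)
    (fun _ _ hFG x => Finset.sum_le_sum_of_subset_of_nonneg hFG fun i _ _ => hpos x i) hs hsum

section Truncate

variable {ι : Type*} [DecidableEq ι]

/-- For a probability vector `f`, the mass `1 - ∑ i ∈ F, f i` outside `F` is moved to `a`. -/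
noncomputable def truncate (F : Finset ι) (a : ι) (f : ι → ℝ) : ι → ℝ :=
  Set.indicator F f + Pi.single a (1 - ∑ i ∈ F, f i)

variable {F : Finset ι} {a : ι} {f : ι → ℝ}

theorem truncate_nonneg (hf : 0 ≤ f) (hsum : HasSum f 1) : 0 ≤ truncate F a f :=
  add_nonneg (Set.indicator_nonneg (fun i _ => hf i))
    (Pi.single_nonneg.2 (sub_nonneg.2 (sum_le_hasSum F (fun i _ => hf i) hsum)))

theorem truncate_apply_of_notMem (ha : a ∈ F) {i : ι} (hi : i ∉ F) : truncate F a f i = 0 := by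
  have hia : i ≠ a := by rintro rfl; exact hi ha
  simp [truncate, hi, hia]

theorem hasSum_truncate : HasSum (truncate F a f) 1 := by
  rw [← add_sub_cancel (∑ i ∈ F, f i) 1]
  exact (F.hasSum_indicator f).add (hasSum_pi_single a _)

theorem continuous_truncate_apply {K : Type*} [TopologicalSpace K] {p : K → ι → ℝ}
    (hp : ∀ i, Continuous fun x => p x i) (i : ι) :
    Continuous fun x => truncate F a (p x) i := by
  simp only [truncate, Pi.add_apply, Set.indicator_apply, Pi.single_apply]
  split_ifs <;> fun_prop

theorem abs_sub_truncate (ha : a ∈ F) (hf : 0 ≤ f) (hsum : HasSum f 1) :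
    (fun i => |f i - truncate F a f i|) =
      Set.indicator (↑F)ᶜ f + Pi.single a (1 - ∑ i ∈ F, f i) := by
  have hmass : ∑ i ∈ F, f i ≤ 1 := sum_le_hasSum F (fun i _ => hf i) hsum
  funext i
  by_cases hi : i ∈ F
  · by_cases hia : i = a
    · subst hia
      simp [truncate, hi, abs_of_nonpos (sub_nonpos.2 hmass)]
    · simp [truncate, hi, hia]
  · have hia : i ≠ a := by rintro rfl; exact hi ha
    simp [truncate, hi, hia, abs_of_nonneg (hf i)]

theorem hasSum_abs_sub_truncate (ha : a ∈ F) (hf : 0 ≤ f) (hsum : HasSum f 1) :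
    HasSum (fun i => |f i - truncate F a f i|) (2 * (1 - ∑ i ∈ F, f i)) := by
  have hcompl : HasSum (Set.indicator (↑F)ᶜ f) (1 - ∑ i ∈ F, f i) := by
    rw [Set.indicator_compl]
    exact hsum.sub (F.hasSum_indicator f)
  rw [abs_sub_truncate ha hf hsum, two_mul]
  exact hcompl.add (hasSum_pi_single a _)

end Truncate

theorem stmt_14_general {Γ : Type*} [Group Γ]
    {K : Type*} [TopologicalSpace K] [CompactSpace K]
    (p : K → Γ → ℝ)
    (hpos : ∀ (x : K) (γ : Γ), 0 ≤ p x γ)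
    (hsum : ∀ x : K, HasSum (p x) 1)
    (hcont : ∀ γ : Γ, Continuous fun x => p x γ)
    (ε : ℝ) (hε : 0 < ε) :
    ∃ (F : Finset Γ) (q : K → Γ → ℝ), (1 : Γ) ∈ F ∧
      (∀ (x : K) (γ : Γ), 0 ≤ q x γ) ∧
      (∀ (x : K) (γ : Γ), γ ∉ F → q x γ = 0) ∧
      (∀ x : K, HasSum (q x) 1) ∧
      (∀ γ : Γ, Continuous fun x => q x γ) ∧
      ∀ x : K, ∑' γ : Γ, |p x γ - q x γ| < ε := by
  classical
  have hunif := tendstoUniformly_finset_sum_of_hasSum hpos hsum hcont continuous_const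
  obtain ⟨F, hmass, hF⟩ := ((Metric.tendstoUniformly_iff.1 hunif (ε / 2) (half_pos hε)).and
    (eventually_ge_atTop {1})).exists
  have hF1 : (1 : Γ) ∈ F := Finset.singleton_subset_iff.1 hF
  refine ⟨F, fun x => truncate F 1 (p x), hF1, fun x => truncate_nonneg (hpos x) (hsum x),
    fun x _ => truncate_apply_of_notMem hF1, fun x => hasSum_truncate,
    continuous_truncate_apply hcont, fun x => ?_⟩
  have hmass_x : dist 1 (∑ γ ∈ F, p x γ) < ε / 2 := hmass x
  rw [(hasSum_abs_sub_truncate hF1 (hpos x) (hsum x)).tsum_eq]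
  rw [Real.dist_eq, abs_lt] at hmass_x
  linarith

/-- Let `Γ` be a countable discrete group, `K` compact, and `p : K → Prob(Γ) ⊆ ℓ¹(Γ)` continuous
for the topology of pointwise convergence. For every `ε > 0` there are a finite `F ⊆ Γ`
containing `1` and a continuous `q : K → Prob(Γ)` supported in `F` with
`‖p(x) − q(x)‖₁ < ε` for all `x`. -/
theorem stmt_14 {Γ : Type*} [Group Γ] [Countable Γ]
    {K : Type*} [TopologicalSpace K] [CompactSpace K]
    (p : K → Γ → ℝ)
    (hpos : ∀ (x : K) (γ : Γ), 0 ≤ p x γ)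
    (hsum : ∀ x : K, HasSum (p x) 1)
    (hcont : ∀ γ : Γ, Continuous fun x => p x γ)
    (ε : ℝ) (hε : 0 < ε) :
    ∃ (F : Finset Γ) (q : K → Γ → ℝ), (1 : Γ) ∈ F ∧
      (∀ (x : K) (γ : Γ), 0 ≤ q x γ) ∧
      (∀ (x : K) (γ : Γ), γ ∉ F → q x γ = 0) ∧
      (∀ x : K, HasSum (q x) 1) ∧
      (∀ γ : Γ, Continuous fun x => q x γ) ∧
      ∀ x : K, ∑' γ : Γ, |p x γ - q x γ| < ε :=
  stmt_14_general p hpos hsum hcont ε hε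
end

section
/- Let Γ be a group and let S, T be finite subsets of Γ. Let X_{S,T} be the set of functions x : Γ → S ⊔ T such that the families {x⁻¹(s)·s : s ∈ S} and {x⁻¹(t)·t : t ∈ T} are each partitions of Γ (pieces may be empty), where the label sets S and T are regarded as subsets of Γ and x⁻¹(s)·s = {γ s : x(γ) = s}. Let Γ act on (S ⊔ T)^Γ by the shift (γ·x)(δ) = x(γ⁻¹δ); then X_{S,T} is shift-invariant. Let P = {x ∈ X_{S,T} : x(1) ∈ S}. Then the map x ↦ x(1)⁻¹·x is a bijection from P onto X_{S,T}. -/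
/-- The space `X_{S,T}` of `(S,T)`-paradoxical decompositions of `Γ` is shift-invariant, and
`x ↦ x(1)⁻¹ · x` is a bijection from `P = {x ∈ X_{S,T} : x(1) ∈ S}` onto `X_{S,T}`. -/
theorem stmt_15 {Γ : Type*} [Group Γ] (S T : Finset Γ) :
    ∀ (XST : Set (Γ → (↥S ⊕ ↥T))), XST = {x |
        (∀ δ : Γ, ∃! s : ↥S, x (δ * (s : Γ)⁻¹) = Sum.inl s) ∧
        (∀ δ : Γ, ∃! t : ↥T, x (δ * (t : Γ)⁻¹) = Sum.inr t)} →
    ∀ (shift : Γ → (Γ → (↥S ⊕ ↥T)) → (Γ → (↥S ⊕ ↥T))),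
      shift = (fun γ x δ => x (γ⁻¹ * δ)) →
    (∀ (γ : Γ) (x : Γ → (↥S ⊕ ↥T)), x ∈ XST → shift γ x ∈ XST) ∧
    Set.BijOn
      (fun x : Γ → (↥S ⊕ ↥T) =>
        shift (Sum.elim (fun s : ↥S => (s : Γ)) (fun _ : ↥T => (1 : Γ)) (x 1))⁻¹ x)
      {x ∈ XST | ∃ s : ↥S, x 1 = Sum.inl s} XST := by
  intro XST hX shift hsh
  subst hX hsh
  have inv : ∀ (γ : Γ) (x : Γ → (↥S ⊕ ↥T)),
      x ∈ {x : Γ → (↥S ⊕ ↥T) |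
        (∀ δ : Γ, ∃! s : ↥S, x (δ * (s : Γ)⁻¹) = Sum.inl s) ∧
        (∀ δ : Γ, ∃! t : ↥T, x (δ * (t : Γ)⁻¹) = Sum.inr t)} →
      (fun δ => x (γ⁻¹ * δ)) ∈ {x : Γ → (↥S ⊕ ↥T) |
        (∀ δ : Γ, ∃! s : ↥S, x (δ * (s : Γ)⁻¹) = Sum.inl s) ∧
        (∀ δ : Γ, ∃! t : ↥T, x (δ * (t : Γ)⁻¹) = Sum.inr t)} := by
    rintro γ x ⟨h1, h2⟩
    constructor
    · intro δ
      obtain ⟨s, hs, hu⟩ := h1 (γ⁻¹ * δ)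
      exact ⟨s, by simpa [mul_assoc] using hs,
        fun u hu' => hu u (by simpa [mul_assoc] using hu')⟩
    · intro δ
      obtain ⟨t, ht, hu⟩ := h2 (γ⁻¹ * δ)
      exact ⟨t, by simpa [mul_assoc] using ht,
        fun u hu' => hu u (by simpa [mul_assoc] using hu')⟩
  refine ⟨inv, ?_, ?_, ?_⟩
  · rintro x ⟨hx, s, hs⟩
    have := inv ((s : Γ))⁻¹ x hx
    simpa [hs] using this
  · rintro x ⟨hx, s, hs⟩ x' ⟨hx', s', hs'⟩ heq
    simp only [hs, hs', Sum.elim_inl] at heq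
    -- heq : (fun δ => x (s * δ)) = fun δ => x' (s' * δ)  (after inv_inv)
    have key : ∀ δ, x ((s : Γ) * δ) = x' ((s' : Γ) * δ) := by
      intro δ
      have := congrFun heq δ
      simpa using this
    -- uniqueness of s for the common image y
    have hy := inv ((s : Γ))⁻¹ x hx
    obtain ⟨u, hu, huu⟩ := hy.1 1
    have h1 : s = u := by
      apply huu
      simpa using hs
    have h2 : s' = u := by
      apply huu
      have hk : x ((s : Γ) * (s' : Γ)⁻¹) = x' 1 := by
        simpa using key ((s' : Γ)⁻¹)
      simpa [hk] using hs'
    have hss' : s = s' := h1.trans h2.symm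
    subst hss'
    funext δ
    have := key ((s : Γ)⁻¹ * δ)
    simpa using this
  · rintro y hy
    obtain ⟨s, hs, -⟩ := hy.1 1
    rw [one_mul] at hs
    refine ⟨fun δ => y ((s : Γ)⁻¹ * δ), ⟨inv _ y hy, s, by simpa using hs⟩, ?_⟩
    have hx1 : (fun δ => y ((s : Γ)⁻¹ * δ)) 1 = Sum.inl s := by simpa using hs
    simp only [hx1, Sum.elim_inl]
    funext δ
    simp
end

section
/- Let G and H be groups and suppose the free group F₂ on two generators embeds into the direct product G × H. Then F₂ embeds into G or F₂ embeds into H. -/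
open Subgroup

/-- A free group over an empty type is trivial. -/
lemma freeGroup_subsingleton_of_isEmpty {ι : Type*} [IsEmpty ι] :
    Subsingleton (FreeGroup ι) := by
  constructor
  intro a b
  have h : Subgroup.closure (Set.range (FreeGroup.of : ι → FreeGroup ι)) = ⊤ :=
    FreeGroup.closure_range_of ι
  have hr : Set.range (FreeGroup.of : ι → FreeGroup ι) = ∅ := Set.range_eq_empty _
  rw [hr, Subgroup.closure_empty] at h
  have ha : a ∈ (⊥ : Subgroup (FreeGroup ι)) := h ▸ Subgroup.mem_top a
  have hb : b ∈ (⊥ : Subgroup (FreeGroup ι)) := h ▸ Subgroup.mem_top b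
  rw [Subgroup.mem_bot] at ha hb
  rw [ha, hb]

/-- A free group over a nonempty type is infinite. -/
lemma freeGroup_infinite {ι : Type*} [Nonempty ι] : Infinite (FreeGroup ι) := by
  obtain ⟨x⟩ := ‹Nonempty ι›
  refine Infinite.of_injective (fun n : ℤ => (FreeGroup.of x : FreeGroup ι) ^ n) ?_
  intro m n hmn
  have := congrArg (FreeGroup.lift (fun _ : ι => Multiplicative.ofAdd (1 : ℤ))) hmn
  simp only [map_zpow, FreeGroup.lift_apply_of] at this
  have h2 : Multiplicative.ofAdd (m : ℤ) = Multiplicative.ofAdd (n : ℤ) := by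
    simpa [← ofAdd_zsmul] using this
  exact Multiplicative.ofAdd.injective h2

/-- A commutative free group has a subsingleton of generators. -/
lemma freeGroup_subsingleton_of_comm {ι : Type*}
    (h : ∀ x y : FreeGroup ι, x * y = y * x) : Subsingleton ι := by
  classical
  by_contra hns
  rw [not_subsingleton_iff_nontrivial] at hns
  obtain ⟨x, y, hxy⟩ := hns.exists_pair_ne
  let f : FreeGroup ι →* Equiv.Perm (Fin 3) :=
    FreeGroup.lift (fun z => if z = x then Equiv.swap 0 1 else Equiv.swap 1 2)
  have h1 : f (FreeGroup.of x) = Equiv.swap 0 1 := by simp [f]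
  have h2 : f (FreeGroup.of y) = Equiv.swap 1 2 := by
    simp only [f, FreeGroup.lift_apply_of, if_neg hxy.symm]
  have hc := congrArg f (h (FreeGroup.of x) (FreeGroup.of y))
  rw [map_mul, map_mul, h1, h2] at hc
  exact absurd hc (by decide)

/-- Free groups are torsion-free. -/
lemma freeGroup_eq_one_of_finOrder {κ : Type*} {ι : Type*} [Group κ] [IsFreeGroup κ]
    (c : κ) (hc : IsOfFinOrder c) : c = 1 := by
  by_contra h
  have hfin : (Subgroup.zpowers c : Set κ).Finite := hc.finite_zpowers
  have hfin' : Finite (Subgroup.zpowers c) := hfin.to_subtype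
  letI : IsFreeGroup (Subgroup.zpowers c) := subgroupIsFreeOfIsFree _
  set K := Subgroup.zpowers c
  have hnt : Nontrivial K := by
    refine ⟨⟨c, Subgroup.mem_zpowers c⟩, 1, ?_⟩
    intro hh
    exact h (by simpa using congrArg Subtype.val hh)
  have e := IsFreeGroup.toFreeGroup (G := K)
  have hntF : Nontrivial (FreeGroup (IsFreeGroup.Generators K)) := e.symm.toEquiv.nontrivial
  have hne : Nonempty (IsFreeGroup.Generators K) := by
    by_contra hemp
    rw [not_nonempty_iff] at hemp
    have := freeGroup_subsingleton_of_isEmpty (ι := IsFreeGroup.Generators K)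
    exact not_subsingleton_iff_nontrivial.mpr hntF this
  haveI := hne
  haveI : Infinite (FreeGroup (IsFreeGroup.Generators K)) := freeGroup_infinite
  have : Infinite K := e.symm.toEquiv.infinite_iff.mp inferInstance
  exact absurd hfin' (by rw [not_finite_iff_infinite]; exact this)

/-- Two commuting elements of a free group are powers of a common element. -/
lemma freeGroup_commute_common_root {κ : Type*} [Group κ] [IsFreeGroup κ]
    {a b : κ} (hab : a * b = b * a) :
    ∃ (c : κ) (m n : ℤ), a = c ^ m ∧ b = c ^ n := by
  have hcomm : ∀ x ∈ ({a, b} : Set κ), ∀ y ∈ ({a, b} : Set κ), x * y = y * x := by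
    rintro x (rfl | rfl) y (rfl | rfl) <;> simp_all
  set K := Subgroup.closure ({a, b} : Set κ)
  letI : CommGroup K := Subgroup.closureCommGroupOfComm hcomm
  letI : IsFreeGroup K := subgroupIsFreeOfIsFree _
  have e := IsFreeGroup.toFreeGroup (G := K)
  have hFcomm : ∀ x y : FreeGroup (IsFreeGroup.Generators K), x * y = y * x := by
    intro x y
    have := mul_comm (e.symm x) (e.symm y)
    have := congrArg e this
    simpa using this
  have hsub : Subsingleton (IsFreeGroup.Generators K) := freeGroup_subsingleton_of_comm hFcomm
  -- FreeGroup over a subsingleton is cyclic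
  have hcyc : IsCyclic (FreeGroup (IsFreeGroup.Generators K)) := by
    rcases isEmpty_or_nonempty (IsFreeGroup.Generators K) with hemp | ⟨⟨x₀⟩⟩
    · have := freeGroup_subsingleton_of_isEmpty (ι := IsFreeGroup.Generators K)
      exact isCyclic_of_subsingleton
    · refine ⟨⟨FreeGroup.of x₀, fun z => ?_⟩⟩
      have hz : z ∈ Subgroup.closure (Set.range (FreeGroup.of :
          IsFreeGroup.Generators K → FreeGroup (IsFreeGroup.Generators K))) := by
        rw [FreeGroup.closure_range_of]; trivial
      have hle : Subgroup.closure (Set.range (FreeGroup.of :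
          IsFreeGroup.Generators K → FreeGroup (IsFreeGroup.Generators K))) ≤
          Subgroup.zpowers (FreeGroup.of x₀) := by
        rw [Subgroup.closure_le]
        rintro _ ⟨i, rfl⟩
        have : i = x₀ := Subsingleton.elim i x₀
        rw [this]
        exact Subgroup.mem_zpowers _
      exact hle hz
  have hcycK : IsCyclic K := isCyclic_of_surjective e.symm e.symm.surjective
  obtain ⟨g, hg⟩ := hcycK
  have ha : (⟨a, Subgroup.subset_closure (by simp)⟩ : K) ∈ Subgroup.zpowers g := hg _
  have hb : (⟨b, Subgroup.subset_closure (by simp)⟩ : K) ∈ Subgroup.zpowers g := hg _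
  obtain ⟨m, hm⟩ := Subgroup.mem_zpowers_iff.mp ha
  obtain ⟨n, hn⟩ := Subgroup.mem_zpowers_iff.mp hb
  refine ⟨(g : κ), m, n, ?_, ?_⟩
  · have := congrArg Subtype.val hm
    simpa using this.symm
  · have := congrArg Subtype.val hn
    simpa using this.symm

/-- If the free group `F₂` embeds into a direct product `G × H`, then it embeds into `G` or
into `H`. -/
theorem stmt_16 {G H : Type*} [Group G] [Group H]
    (φ : FreeGroup (Fin 2) →* G × H) (hφ : Function.Injective φ) :
    (∃ ψ : FreeGroup (Fin 2) →* G, Function.Injective ψ) ∨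
    (∃ ψ : FreeGroup (Fin 2) →* H, Function.Injective ψ) := by
  by_contra hcon
  push_neg at hcon
  obtain ⟨h1, h2⟩ := hcon
  set pG := (MonoidHom.fst G H).comp φ with hpG
  set pH := (MonoidHom.snd G H).comp φ with hpH
  have hG : ¬ Function.Injective pG := h1 pG
  have hH : ¬ Function.Injective pH := h2 pH
  -- extract nontrivial kernel elements
  have hGk : pG.ker ≠ ⊥ := fun hk => hG ((MonoidHom.ker_eq_bot_iff pG).mp hk)
  have hHk : pH.ker ≠ ⊥ := fun hk => hH ((MonoidHom.ker_eq_bot_iff pH).mp hk)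
  obtain ⟨⟨b, hbk⟩, hbne⟩ := Subgroup.ne_bot_iff_exists_ne_one.mp hGk
  obtain ⟨⟨a, hak⟩, hane⟩ := Subgroup.ne_bot_iff_exists_ne_one.mp hHk
  have hb1 : b ≠ 1 := fun hh => hbne (Subtype.ext hh)
  have ha1 : a ≠ 1 := fun hh => hane (Subtype.ext hh)
  have hbG : pG b = 1 := MonoidHom.mem_ker.mp hbk
  have haH : pH a = 1 := MonoidHom.mem_ker.mp hak
  -- a and b commute
  have hab : a * b = b * a := by
    apply hφ
    rw [map_mul, map_mul]
    have hbG' : (φ b).1 = 1 := hbG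
    have haH' : (φ a).2 = 1 := haH
    ext
    · simp [hbG']
    · simp [haH']
  obtain ⟨c, m, n, hcm, hcn⟩ := freeGroup_commute_common_root hab
  have hm0 : m ≠ 0 := by rintro rfl; simp at hcm; exact ha1 hcm
  have hn0 : n ≠ 0 := by rintro rfl; simp at hcn; exact hb1 hcn
  have hc2 : (pH c) ^ m = 1 := by rw [← map_zpow, ← hcm]; exact haH
  have hc1 : (pG c) ^ n = 1 := by rw [← map_zpow, ← hcn]; exact hbG
  have hczpow : c ^ (m * n) = 1 := by
    apply hφ
    rw [map_one]
    have f1 : pG (c ^ (m * n)) = 1 := by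
      rw [map_zpow, mul_comm m n, zpow_mul, hc1, one_zpow]
    have f2 : pH (c ^ (m * n)) = 1 := by
      rw [map_zpow, zpow_mul, hc2, one_zpow]
    exact Prod.ext f1 f2
  have hmn0 : m * n ≠ 0 := mul_ne_zero hm0 hn0
  have hcfin : IsOfFinOrder c := by
    rw [isOfFinOrder_iff_pow_eq_one]
    refine ⟨(m * n).natAbs, Int.natAbs_pos.mpr hmn0, ?_⟩
    have : c ^ ((m * n).natAbs : ℤ) = 1 := by
      rcases Int.natAbs_eq (m * n) with hh | hh
      · rw [← hh, hczpow]
      · rw [← neg_neg ((m * n).natAbs : ℤ), ← hh, zpow_neg, hczpow, inv_one]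
    rw [← zpow_natCast, this]
  have hc1' : c = 1 := freeGroup_eq_one_of_finOrder (ι := Fin 2) c hcfin
  rw [hc1', one_zpow] at hcm
  exact ha1 hcm
end
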